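/- Let (S,w) be an instance of the hereditary 2-3-Set Packing problem, let A ⊆ S be a disjoint sub-collection such that no local improvement of A of size at most 10 exists, and suppose some v ∈ B \ (B_1 ∪ B_2) intersects only sets of A. If every set of A intersected by v belongs to the class C of sets receiving exactly their own weight in the first weight-distribution step, this yields a contradiction; formally: under the stated no-local-improvement assumption, there is no v ∈ B \ (B_1 ∪ B_2) with N(v, A) ⊆ C. -/

import Mathlib

open scoped Classical

namespace SetPacking

variable {α : Type*}

/-- Weight of a set: `|s| - 1` (so 1 for 2-element sets and 2 for 3-element sets). -/
noncomputable def wt (s : Finset α) : ℕ := s.card - 1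

/-- Total weight of a collection of sets. -/
noncomputable def wsum (X : Finset (Finset α)) : ℕ := ∑ s ∈ X, wt s

/-- `N(X, A)`: the sets of `A` intersecting some member of `X` (this includes `X ∩ A`
when the sets involved are nonempty). -/
noncomputable def nbhd (X A : Finset (Finset α)) : Finset (Finset α) :=
  A.filter (fun a => ∃ x ∈ X, (x ∩ a).Nonempty)

/-- A sub-collection consisting of pairwise disjoint sets. -/
def PairwiseDisjointSets (X : Finset (Finset α)) : Prop :=
  ∀ x ∈ X, ∀ y ∈ X, x ≠ y → x ∩ y = ∅

/-- `X` is a local improvement of `A`: a disjoint sub-collection with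
`w(X) > w(N(X, A))`, or equal weight and strictly more weight-2 (i.e. 3-element)
sets in `X` than in `N(X, A)`. -/
def IsLocalImprovement (A X : Finset (Finset α)) : Prop :=
  PairwiseDisjointSets X ∧
    (wsum (nbhd X A) < wsum X ∨
      (wsum X = wsum (nbhd X A) ∧
        ((nbhd X A).filter (fun s => s.card = 3)).card
          < (X.filter (fun s => s.card = 3)).card))

/-- `B₁`: the sets of `B` with exactly one neighbor in `A` (in the conflict graph). -/
noncomputable def B1 (A B : Finset (Finset α)) : Finset (Finset α) :=
  B.filter (fun v => (A.filter (fun a => (v ∩ a).Nonempty)).card = 1)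

/-- `B₂`: the weight-2 sets of `B` with exactly two incident edges in the multigraph
conflict graph (that is, `∑_{a ∈ A} |v ∩ a| = 2`), connecting to two distinct sets
of `A`. -/
noncomputable def B2 (A B : Finset (Finset α)) : Finset (Finset α) :=
  B.filter (fun v => v.card = 3 ∧ (∑ a ∈ A, (v ∩ a).card) = 2 ∧
    (A.filter (fun a => (v ∩ a).Nonempty)).card = 2)

/-- The total amount of weight that `u` receives in the first distribution step:
each `v ∈ B₁` sends its weight `wt v` to its unique neighbor in `A`, and each
`v ∈ B₂` sends 1 along each of its two edges (one unit to each of its two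
distinct neighbors in `A`). -/
noncomputable def received (A B : Finset (Finset α)) (u : Finset α) : ℕ :=
  (∑ v ∈ (B1 A B).filter (fun v => (v ∩ u).Nonempty), wt v) +
    ((B2 A B).filter (fun v => (v ∩ u).Nonempty)).card

/-- `C`: the sets of `A` receiving exactly their own weight in the first step. -/
noncomputable def Cset (A B : Finset (Finset α)) : Finset (Finset α) :=
  A.filter (fun u => received A B u = wt u)

end SetPacking

/-! Let `N` be the sets of `A` met by `v`. Each `a ∈ N` lies in `C`, so it receives exactly
`w(a)` from the sets of `B₁ ∪ B₂` meeting it. Keep every set of `B₁` meeting `N` and every set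
of `B₂` with both neighbours in `N`. A set of `B₂` with a single neighbour `a ∈ N` meets `A` in
only two of its three points, so one of its points lies outside `⋃ A`; together with a point of
`a` it spans a 2-subset, which lies in `S` by heredity and meets only `a`. These pieces are
pairwise disjoint, weigh `∑_{a ∈ N} received(a) = w(N)` in total, and have all their neighbours
in `N`. Adding `v` gives a collection `X` with `w(X) = w(v) + w(N) > w(N(X, A))`. Every sender
gives at least 1 and `w(a) ≤ 2`, so each `a ∈ N` has at most two senders; with `|N| ≤ |v| ≤ 3`
this bounds `|X|` by `1 + 2 · 3 ≤ 10`, so `X` is a forbidden local improvement. -/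

namespace SetPacking

variable {α : Type*}

section PairwiseDisjointSets

variable {B Y : Finset (Finset α)}

theorem PairwiseDisjointSets.subset (hB : PairwiseDisjointSets B) (hYB : Y ⊆ B) :
    PairwiseDisjointSets Y :=
  fun x hx y hy => hB x (hYB hx) y (hYB hy)

theorem PairwiseDisjointSets.inter_eq_empty_of_subset (hB : PairwiseDisjointSets B)
    {x y s t : Finset α} (hx : x ∈ B) (hy : y ∈ B) (hxy : x ≠ y) (hs : s ⊆ x)
    (ht : t ⊆ y) : s ∩ t = ∅ :=
  Finset.subset_empty.mp (hB x hx y hy hxy ▸ Finset.inter_subset_inter hs ht)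

theorem PairwiseDisjointSets.eq_of_subset (hB : PairwiseDisjointSets B) {x y s : Finset α}
    (hx : x ∈ B) (hy : y ∈ B) (hs : s.Nonempty) (hsx : s ⊆ x) (hsy : s ⊆ y) : x = y := by
  by_contra hxy
  have hss := hB.inter_eq_empty_of_subset hx hy hxy hsx hsy
  rw [Finset.inter_self] at hss
  exact hs.ne_empty hss

theorem PairwiseDisjointSets.image_of_subset (hB : PairwiseDisjointSets B)
    {r : Finset α → Finset α} (hr : ∀ u ∈ B, r u ⊆ u ∧ (r u).Nonempty) :
    PairwiseDisjointSets (B.image r) ∧ Set.InjOn r B := by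
  have hinj : Set.InjOn r B := fun x hx y hy hxy =>
    hB.eq_of_subset hx hy (hr x hx).2 (hr x hx).1 (hxy ▸ (hr y hy).1)
  refine ⟨?_, hinj⟩
  simp only [PairwiseDisjointSets, Finset.mem_image]
  rintro _ ⟨x, hx, rfl⟩ _ ⟨y, hy, rfl⟩ hne
  exact hB.inter_eq_empty_of_subset hx hy (fun h => hne (h ▸ rfl)) (hr x hx).1 (hr y hy).1

theorem PairwiseDisjointSets.insert (hY : PairwiseDisjointSets Y) {v : Finset α}
    (hv : ∀ y ∈ Y, v ∩ y = ∅) : PairwiseDisjointSets (insert v Y) := by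
  intro x hx y hy hxy
  rcases Finset.mem_insert.mp hx with rfl | hxY <;> rcases Finset.mem_insert.mp hy with rfl | hyY
  · exact absurd rfl hxy
  · exact hv y hyY
  · rw [Finset.inter_comm]; exact hv x hxY
  · exact hY x hxY y hyY hxy

end PairwiseDisjointSets

section Neighbours

variable {A : Finset (Finset α)}

noncomputable def nbrs (N : Finset (Finset α)) (u : Finset α) : Finset (Finset α) :=
  N.filter (fun a => (u ∩ a).Nonempty)

theorem nbhd_singleton (A : Finset (Finset α)) (v : Finset α) : nbhd {v} A = nbrs A v := by
  simp [nbhd, nbrs]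

theorem nbhd_subset {X N : Finset (Finset α)} (h : ∀ x ∈ X, nbrs A x ⊆ N) :
    nbhd X A ⊆ N := by
  intro a ha
  obtain ⟨haA, x, hx, hxa⟩ := Finset.mem_filter.mp ha
  exact h x hx (Finset.mem_filter.mpr ⟨haA, hxa⟩)

theorem nbrs_mono {N : Finset (Finset α)} (hN : N ⊆ A) (u : Finset α) : nbrs N u ⊆ nbrs A u :=
  Finset.filter_subset_filter _ hN

theorem card_nbrs_le (hA : PairwiseDisjointSets A) (v : Finset α) :
    (nbrs A v).card ≤ v.card := by
  have hdisj : Set.PairwiseDisjoint ↑(nbrs A v) (fun a => v ∩ a) := by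
    intro a ha b hb hab
    change Disjoint (v ∩ a) (v ∩ b)
    rw [Finset.disjoint_iff_inter_eq_empty]
    exact hA.inter_eq_empty_of_subset (Finset.mem_filter.mp ha).1 (Finset.mem_filter.mp hb).1
      hab Finset.inter_subset_right Finset.inter_subset_right
  calc (nbrs A v).card = ∑ _a ∈ nbrs A v, 1 := Finset.card_eq_sum_ones _
    _ ≤ ∑ a ∈ nbrs A v, (v ∩ a).card :=
        Finset.sum_le_sum fun a ha => Finset.card_pos.mpr (Finset.mem_filter.mp ha).2
    _ = ((nbrs A v).biUnion fun a => v ∩ a).card := (Finset.card_biUnion hdisj).symm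
    _ ≤ v.card :=
        Finset.card_le_card (Finset.biUnion_subset.mpr fun _ _ => Finset.inter_subset_left)

theorem exists_mem_forall_notMem_of_sum_card_inter_lt {u : Finset α}
    (h : ∑ a ∈ A, (u ∩ a).card < u.card) : ∃ e ∈ u, ∀ a ∈ A, e ∉ a := by
  by_contra! hcov
  have hsub : u ⊆ A.biUnion (fun a => u ∩ a) := fun e he => by
    obtain ⟨a, ha, hea⟩ := hcov e he
    exact Finset.mem_biUnion.mpr ⟨a, ha, Finset.mem_inter.mpr ⟨he, hea⟩⟩
  exact (Finset.card_le_card hsub |>.trans Finset.card_biUnion_le).not_gt h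

theorem exists_pair_subset_nbrs_subset_singleton (hA : PairwiseDisjointSets A)
    {u a : Finset α} (ha : a ∈ A) (hua : (u ∩ a).Nonempty) {e : α} (heu : e ∈ u)
    (he : ∀ b ∈ A, e ∉ b) : ∃ t ⊆ u, t.card = 2 ∧ nbrs A t ⊆ {a} := by
  obtain ⟨p, hp⟩ := hua
  obtain ⟨hpu, hpa⟩ := Finset.mem_inter.mp hp
  have hpe : p ≠ e := fun h => he a ha (h ▸ hpa)
  refine ⟨{p, e}, Finset.insert_subset hpu (Finset.singleton_subset_iff.mpr heu),
    Finset.card_pair hpe, fun b hb => ?_⟩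
  obtain ⟨hbA, x, hx⟩ := Finset.mem_filter.mp hb
  obtain ⟨hxpe, hxb⟩ := Finset.mem_inter.mp hx
  rcases Finset.mem_insert.mp hxpe with rfl | hxe
  · exact Finset.mem_singleton.mpr (hA.eq_of_subset hbA ha ⟨x, Finset.mem_singleton_self x⟩
      (Finset.singleton_subset_iff.mpr hxb) (Finset.singleton_subset_iff.mpr hpa))
  · exact absurd (Finset.mem_singleton.mp hxe ▸ hxb) (he b hbA)

end Neighbours

theorem wsum_le_two_mul_card {X : Finset (Finset α)} (hX : ∀ s ∈ X, s.card ≤ 3) :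
    wsum X ≤ 2 * X.card := by
  rw [wsum, mul_comm, ← smul_eq_mul, ← Finset.sum_const]
  exact Finset.sum_le_sum fun s hs => by have := hX s hs; unfold wt; omega

theorem isLocalImprovement_insert {A Y : Finset (Finset α)} {v : Finset α}
    (hY : PairwiseDisjointSets Y) (hvY : ∀ y ∈ Y, v ∩ y = ∅)
    (hYv : ∀ y ∈ Y, nbrs A y ⊆ nbrs A v) (hw : wsum (nbrs A v) ≤ wsum Y) (hv : 2 ≤ v.card) :
    IsLocalImprovement A (insert v Y) := by
  have hvnY : v ∉ Y := fun h => by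
    have hvv := hvY v h
    rw [Finset.inter_self] at hvv
    simp [hvv] at hv
  have hnbhd : wsum (nbhd (insert v Y) A) ≤ wsum (nbrs A v) :=
    Finset.sum_le_sum_of_subset (nbhd_subset (Finset.forall_mem_insert _ _ _ |>.mpr
      ⟨subset_rfl, hYv⟩))
  have hwX : wsum (insert v Y) = wt v + wsum Y := Finset.sum_insert hvnY
  refine ⟨hY.insert hvY, Or.inl ?_⟩
  rw [hwX, wt]
  omega

section Distribution

variable {S A B N : Finset (Finset α)}

theorem B1_union_B2_subset : B1 A B ∪ B2 A B ⊆ B :=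
  Finset.union_subset (Finset.filter_subset _ _) (Finset.filter_subset _ _)

theorem notMem_B2_of_mem_B1 {u : Finset α} (hu : u ∈ B1 A B) : u ∉ B2 A B := fun hu2 => by
  have h1 := (Finset.mem_filter.mp hu).2
  have h2 := (Finset.mem_filter.mp hu2).2.2.2
  omega

/-- What `u` sends along each of its edges to `A` in the first distribution step. -/
noncomputable def share (A B : Finset (Finset α)) (u : Finset α) : ℕ :=
  (if u ∈ B1 A B then wt u else 0) + (if u ∈ B2 A B then 1 else 0)

noncomputable def senders (A B : Finset (Finset α)) (a : Finset α) : Finset (Finset α) :=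
  (B1 A B ∪ B2 A B).filter fun u => (u ∩ a).Nonempty

theorem received_eq_sum_share (A B : Finset (Finset α)) (a : Finset α) :
    received A B a = ∑ u ∈ senders A B a, share A B u := by
  have hfilter : ∀ B' ⊆ B1 A B ∪ B2 A B,
      senders A B a ∩ B' = B'.filter fun u => (u ∩ a).Nonempty := fun B' hB' => by
    ext u; constructor
    · simp +contextual [senders]
    · intro hu; simp_all [senders, Finset.mem_filter, hB' (Finset.mem_filter.mp hu).1]
  simp only [share]
  rw [Finset.sum_add_distrib, Finset.sum_ite_mem, Finset.sum_ite_mem,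
    hfilter _ Finset.subset_union_left, hfilter _ Finset.subset_union_right,
    ← Finset.card_eq_sum_ones, received]

theorem sum_received_eq (A B N : Finset (Finset α)) :
    ∑ a ∈ N, received A B a = ∑ u ∈ B1 A B ∪ B2 A B, share A B u * (nbrs N u).card := by
  simp_rw [received_eq_sum_share, senders, Finset.sum_filter, nbrs, Finset.card_filter,
    Finset.mul_sum, mul_ite, mul_one, mul_zero]
  exact Finset.sum_comm

theorem one_le_share (hcards : ∀ s ∈ S, s.card = 2 ∨ s.card = 3) (hBS : B ⊆ S)
    {u : Finset α} (hu : u ∈ B1 A B ∪ B2 A B) : 1 ≤ share A B u := by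
  have hcard := hcards u (hBS (B1_union_B2_subset hu))
  rcases Finset.mem_union.mp hu with h | h
  · simp only [share, h, if_true, wt]; omega
  · simp only [share, h, if_true]; omega

theorem card_senders_le_received (hcards : ∀ s ∈ S, s.card = 2 ∨ s.card = 3) (hBS : B ⊆ S)
    (a : Finset α) : (senders A B a).card ≤ received A B a := by
  rw [received_eq_sum_share, Finset.card_eq_sum_ones]
  exact Finset.sum_le_sum fun u hu => one_le_share hcards hBS (Finset.mem_of_mem_filter u hu)

theorem exists_restriction_of_mem_B1 (hBS : B ⊆ S) (hN : N ⊆ A) {u a : Finset α}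
    (hu : u ∈ B1 A B) (ha : a ∈ N) (hua : (u ∩ a).Nonempty) :
    ∃ t ⊆ u, t ∈ S ∧ t.Nonempty ∧ nbrs A t ⊆ N ∧
      wt t = share A B u * (nbrs N u).card := by
  have haN : a ∈ nbrs N u := Finset.mem_filter.mpr ⟨ha, hua⟩
  obtain ⟨b, hAu⟩ :=
    Finset.card_eq_one.mp (show (nbrs A u).card = 1 from (Finset.mem_filter.mp hu).2)
  obtain rfl : a = b := Finset.mem_singleton.mp (hAu ▸ nbrs_mono hN u haN)
  have hNu : nbrs N u = {a} :=
    Finset.Subset.antisymm (hAu ▸ nbrs_mono hN u) (Finset.singleton_subset_iff.mpr haN)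
  refine ⟨u, subset_rfl, hBS (Finset.mem_of_mem_filter u hu),
    hua.mono Finset.inter_subset_left, hAu ▸ Finset.singleton_subset_iff.mpr ha, ?_⟩
  simp [share, hu, notMem_B2_of_mem_B1 hu, hNu]

theorem exists_restriction_of_mem_B2 (hA : PairwiseDisjointSets A) (hBS : B ⊆ S)
    (hher : ∀ s ∈ S, s.card = 3 → ∀ t ⊆ s, t.card = 2 → t ∈ S) (hN : N ⊆ A)
    {u a : Finset α} (hu : u ∈ B2 A B) (ha : a ∈ N) (hua : (u ∩ a).Nonempty) :
    ∃ t ⊆ u, t ∈ S ∧ t.Nonempty ∧ nbrs A t ⊆ N ∧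
      wt t = share A B u * (nbrs N u).card := by
  obtain ⟨huB, hcard, hsum, hdeg⟩ := Finset.mem_filter.mp hu
  have hshare : share A B u = 1 := by
    have hu1 : u ∉ B1 A B := fun h => notMem_B2_of_mem_B1 h hu
    simp [share, hu, hu1]
  have hNA : nbrs N u ⊆ nbrs A u := nbrs_mono hN u
  have hpos : 0 < (nbrs N u).card :=
    Finset.card_pos.mpr ⟨a, Finset.mem_filter.mpr ⟨ha, hua⟩⟩
  have hle : (nbrs N u).card ≤ 2 := hdeg ▸ Finset.card_le_card hNA
  rw [hshare, one_mul]
  rcases (by omega : (nbrs N u).card = 2 ∨ (nbrs N u).card = 1) with h2 | h1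
  · have hAN : nbrs A u = nbrs N u :=
      (Finset.eq_of_subset_of_card_le hNA (by rw [h2]; exact hdeg.le)).symm
    refine ⟨u, subset_rfl, hBS huB, hua.mono Finset.inter_subset_left,
      hAN ▸ Finset.filter_subset _ _, ?_⟩
    simp [wt, hcard, h2]
  · obtain ⟨e, heu, he⟩ :=
      exists_mem_forall_notMem_of_sum_card_inter_lt (A := A) (u := u) (by omega)
    obtain ⟨t, htu, ht2, htA⟩ := exists_pair_subset_nbrs_subset_singleton hA (hN ha) hua heu he
    refine ⟨t, htu, hher u (hBS huB) hcard t htu ht2, Finset.card_pos.mp (by omega),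
      htA.trans (Finset.singleton_subset_iff.mpr ha), ?_⟩
    simp [wt, ht2, h1]

theorem exists_packing_wsum_eq_sum_received (hA : PairwiseDisjointSets A)
    (hB : PairwiseDisjointSets B) (hBS : B ⊆ S)
    (hher : ∀ s ∈ S, s.card = 3 → ∀ t ⊆ s, t.card = 2 → t ∈ S) (hN : N ⊆ A) :
    ∃ Y ⊆ S, PairwiseDisjointSets Y ∧ (∀ y ∈ Y, ∃ u ∈ B1 A B ∪ B2 A B, y ⊆ u) ∧
      (∀ y ∈ Y, nbrs A y ⊆ N) ∧ wsum Y = ∑ a ∈ N, received A B a ∧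
      Y.card ≤ ∑ a ∈ N, (senders A B a).card := by
  set P := N.biUnion (senders A B)
  have hP : ∀ u ∈ P, u ∈ B1 A B ∪ B2 A B ∧ ∃ a ∈ N, (u ∩ a).Nonempty := by
    intro u hu
    obtain ⟨a, ha, hu⟩ := Finset.mem_biUnion.mp hu
    exact ⟨(Finset.mem_filter.mp hu).1, a, ha, (Finset.mem_filter.mp hu).2⟩
  have hrestrict : ∀ u ∈ P, ∃ t ⊆ u, t ∈ S ∧ t.Nonempty ∧ nbrs A t ⊆ N ∧
      wt t = share A B u * (nbrs N u).card := fun u hu => by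
    obtain ⟨hu12, a, ha, hua⟩ := hP u hu
    rcases Finset.mem_union.mp hu12 with h | h
    · exact exists_restriction_of_mem_B1 hBS hN h ha hua
    · exact exists_restriction_of_mem_B2 hA hBS hher hN h ha hua
  choose! r hrsub hrS hrne hrN hrw using hrestrict
  have hP12 : P ⊆ B1 A B ∪ B2 A B := fun u hu => (hP u hu).1
  obtain ⟨hdisj, hinj⟩ := (hB.subset (hP12.trans B1_union_B2_subset)).image_of_subset
    fun u hu => ⟨hrsub u hu, hrne u hu⟩
  refine ⟨P.image r, Finset.image_subset_iff.mpr hrS, hdisj,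
    Finset.forall_mem_image.mpr fun u hu => ⟨u, hP12 hu, hrsub u hu⟩,
    Finset.forall_mem_image.mpr hrN, ?_, Finset.card_image_le.trans Finset.card_biUnion_le⟩
  have hout : ∀ u ∈ B1 A B ∪ B2 A B, u ∉ P → share A B u * (nbrs N u).card = 0 := by
    intro u hu huP
    suffices nbrs N u = ∅ by simp [this]
    refine Finset.eq_empty_of_forall_notMem fun a ha => huP ?_
    obtain ⟨haN, hua⟩ := Finset.mem_filter.mp ha
    exact Finset.mem_biUnion.mpr ⟨a, haN, Finset.mem_filter.mpr ⟨hu, hua⟩⟩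
  calc wsum (P.image r) = ∑ u ∈ P, wt (r u) := Finset.sum_image hinj
    _ = ∑ u ∈ P, share A B u * (nbrs N u).card := Finset.sum_congr rfl hrw
    _ = ∑ u ∈ B1 A B ∪ B2 A B, share A B u * (nbrs N u).card := Finset.sum_subset hP12 hout
    _ = ∑ a ∈ N, received A B a := (sum_received_eq A B N).symm

end Distribution

end SetPacking

open SetPacking

theorem no_vertex_with_neighborhood_in_C_general {α : Type*} (S A B : Finset (Finset α))
    (hcards : ∀ s ∈ S, s.card = 2 ∨ s.card = 3)
    (hher : ∀ s ∈ S, s.card = 3 → ∀ t ⊆ s, t.card = 2 → t ∈ S)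
    (hAS : A ⊆ S) (hBS : B ⊆ S)
    (hAdisj : PairwiseDisjointSets A) (hBdisj : PairwiseDisjointSets B)
    (hnoimp : ∀ X ⊆ S, X.card ≤ 10 → ¬ IsLocalImprovement A X) :
    ¬ ∃ v ∈ B \ (B1 A B ∪ B2 A B), nbhd {v} A ⊆ Cset A B := by
  rintro ⟨v, hv, hNC⟩
  obtain ⟨hvB, hv12⟩ := Finset.mem_sdiff.mp hv
  have hvcard := hcards v (hBS hvB)
  set N := nbrs A v
  have hNA : N ⊆ A := Finset.filter_subset _ A
  have hreceived : ∀ a ∈ N, received A B a = wt a := fun a ha =>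
    (Finset.mem_filter.mp (hNC (nbhd_singleton A v ▸ ha))).2
  obtain ⟨Y, hYS, hYdisj, hYsub, hYnbrs, hYw, hYcard⟩ :=
    exists_packing_wsum_eq_sum_received hAdisj hBdisj hBS hher hNA
  rw [Finset.sum_congr rfl hreceived, ← wsum] at hYw
  have hvY : ∀ y ∈ Y, v ∩ y = ∅ := fun y hy => by
    obtain ⟨u, hu, hyu⟩ := hYsub y hy
    exact hBdisj.inter_eq_empty_of_subset hvB (B1_union_B2_subset hu)
      (fun h => hv12 (h ▸ hu)) subset_rfl hyu
  have hsenders : ∑ a ∈ N, (senders A B a).card ≤ wsum N :=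
    (Finset.sum_le_sum fun a _ => card_senders_le_received hcards hBS a).trans_eq
      (Finset.sum_congr rfl hreceived)
  have hwN : wsum N ≤ 2 * N.card := wsum_le_two_mul_card fun a ha => by
    rcases hcards a (hAS (hNA ha)) with h | h <;> omega
  have hN : N.card ≤ v.card := card_nbrs_le hAdisj v
  refine hnoimp (insert v Y) (Finset.insert_subset (hBS hvB) hYS) ?_
    (isLocalImprovement_insert hYdisj hvY hYnbrs hYw.ge (by omega))
  have := Finset.card_insert_le v Y
  omega

/-- Hereditary 2-3-Set Packing instance `S`, solution `A` with no
local improvement of size at most 10, optimum solution `B`, `A ∩ B = ∅`.  Then there is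
no `v ∈ B \ (B₁ ∪ B₂)` all of whose neighbors in `A` belong to the class `C` of sets
receiving exactly their own weight in the first weight-distribution step. -/
theorem no_vertex_with_neighborhood_in_C {α : Type*} (S A B : Finset (Finset α))
    (hcards : ∀ s ∈ S, s.card = 2 ∨ s.card = 3)
    (hher : ∀ s ∈ S, s.card = 3 → ∀ t ⊆ s, t.card = 2 → t ∈ S)
    (hAS : A ⊆ S) (hBS : B ⊆ S)
    (hAdisj : PairwiseDisjointSets A) (hBdisj : PairwiseDisjointSets B)
    (hAB : Disjoint A B)
    (hBopt : ∀ X ⊆ S, PairwiseDisjointSets X → wsum X ≤ wsum B)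
    (hnoimp : ∀ X ⊆ S, X.card ≤ 10 → ¬ IsLocalImprovement A X) :
    ¬ ∃ v ∈ B \ (B1 A B ∪ B2 A B), nbhd {v} A ⊆ Cset A B :=
  no_vertex_with_neighborhood_in_C_general S A B hcards hher hAS hBS hAdisj hBdisj hnoimp
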